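/- arXiv:2409.04733 — 5 statements merged into one kernel-verified Lean document; each statement's English description precedes it below -/
import Mathlib

section
/- Let f : R^d → R be twice continuously differentiable, let θ̂, θ* ∈ R^d with θ̂ ≠ θ*, and let L > 0, β > 0 with β ≤ L‖θ̂ − θ*‖². Suppose (i) for every point θ̄ on the line segment joining θ̂ and θ*, (θ̂ − θ*)ᵀ ∇²f(θ̄) (θ̂ − θ*) ≤ 2L ‖θ̂ − θ*‖², and (ii) f(θ) ≥ f(θ̂) − β for every θ on the line segment joining θ̂ and θ*. Then ⟨∇f(θ̂), θ̂ − θ*⟩ ≤ 2 √(L β) · ‖θ̂ − θ*‖, i.e., θ̂ is a 2√(Lβ)-approximate stationary point relative to θ*. -/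
/-!
Write `v = θ* - θ̂` and `g(t) = f(θ̂ + t v)`. The Hessian bound gives `g'' ≤ 2L‖v‖²` on `[0, 1]`,
so `g(t) ≤ g(0) + g'(0) t + L‖v‖² t²`; with `g(t) ≥ g(0) - β` and `g'(0) = -⟨∇f(θ̂), θ̂ - θ*⟩`
this yields `⟨∇f(θ̂), θ̂ - θ*⟩ t ≤ β + L‖v‖² t²` for all `t ∈ [0, 1]`. The choice
`t = √(β / (L‖v‖²))`, admissible because `β ≤ L‖v‖²`, gives the bound `2√(Lβ)‖v‖`.
-/

open scoped RealInnerProductSpace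
open Set
open AffineMap (lineMap)

theorem sub_le_sub_of_hasDerivAt_le {f g f' g' : ℝ → ℝ} {a b : ℝ}
    (hf : ∀ x ∈ Icc a b, HasDerivAt f (f' x) x) (hg : ∀ x ∈ Icc a b, HasDerivAt g (g' x) x)
    (hle : ∀ x ∈ Icc a b, f' x ≤ g' x) {x : ℝ} (hx : x ∈ Icc a b) :
    f x - f a ≤ g x - g a := by
  have hderiv : ∀ y ∈ Icc a b, HasDerivAt (fun y => g y - f y) (g' y - f' y) y :=
    fun y hy => (hg y hy).sub (hf y hy)
  have hmono : MonotoneOn (fun y => g y - f y) (Icc a b) :=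
    monotoneOn_of_hasDerivWithinAt_nonneg (convex_Icc a b)
      (fun y hy => (hderiv y hy).continuousAt.continuousWithinAt)
      (fun y hy => (hderiv y (interior_subset hy)).hasDerivWithinAt)
      (fun y hy => sub_nonneg.2 (hle y (interior_subset hy)))
  have := hmono (left_mem_Icc.2 (hx.1.trans hx.2)) hx hx.1
  linarith

theorem le_taylor_of_deriv2_le {g g' g'' : ℝ → ℝ} {a b M : ℝ}
    (hg : ∀ t ∈ Icc a b, HasDerivAt g (g' t) t) (hg' : ∀ t ∈ Icc a b, HasDerivAt g' (g'' t) t)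
    (hM : ∀ t ∈ Icc a b, g'' t ≤ M) {t : ℝ} (ht : t ∈ Icc a b) :
    g t ≤ g a + g' a * (t - a) + M / 2 * (t - a) ^ 2 := by
  have hg'_le : ∀ s ∈ Icc a b, g' s ≤ g' a + M * (s - a) := fun s hs => by
    have := sub_le_sub_of_hasDerivAt_le hg' (fun s _ => hasDerivAt_mul_const M) hM hs
    linarith
  have hquad : ∀ s ∈ Icc a b, HasDerivAt (fun s => g' a * s + M / 2 * (s - a) ^ 2)
      (g' a + M * (s - a)) s := fun s _ => by
    refine (((hasDerivAt_id' s).const_mul (g' a)).fun_add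
      ((((hasDerivAt_id' s).sub_const a).fun_pow 2).const_mul (M / 2))).congr_deriv ?_
    norm_num
    ring
  have := sub_le_sub_of_hasDerivAt_le hg hquad hg'_le ht
  linarith

section LineRestriction

variable {E F : Type*} [NormedAddCommGroup E] [NormedSpace ℝ E]
  [NormedAddCommGroup F] [NormedSpace ℝ F] {f : E → F} (x y : E) {t : ℝ}

theorem hasDerivAt_comp_lineMap (hf : DifferentiableAt ℝ f (lineMap x y t)) :
    HasDerivAt (fun s => f (lineMap x y s)) (fderiv ℝ f (lineMap x y t) (y - x)) t :=
  hf.hasFDerivAt.comp_hasDerivAt t AffineMap.hasDerivAt_lineMap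

theorem hasDerivAt_fderiv_comp_lineMap (hf : DifferentiableAt ℝ (fderiv ℝ f) (lineMap x y t)) :
    HasDerivAt (fun s => fderiv ℝ f (lineMap x y s) (y - x))
      (fderiv ℝ (fderiv ℝ f) (lineMap x y t) (y - x) (y - x)) t := by
  simpa using (hasDerivAt_comp_lineMap x y hf).clm_apply (hasDerivAt_const t (y - x))

end LineRestriction

theorem le_taylor_lineMap_of_hessian_le {E : Type*} [NormedAddCommGroup E] [NormedSpace ℝ E]
    {f : E → ℝ} (hf : Differentiable ℝ f) (hf' : Differentiable ℝ (fderiv ℝ f)) {x y : E}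
    {M : ℝ} (hM : ∀ z ∈ segment ℝ x y, fderiv ℝ (fderiv ℝ f) z (y - x) (y - x) ≤ M)
    {t : ℝ} (ht : t ∈ Icc (0 : ℝ) 1) :
    f (lineMap x y t) ≤ f x + fderiv ℝ f x (y - x) * t + M / 2 * t ^ 2 := by
  have := le_taylor_of_deriv2_le (fun s _ => hasDerivAt_comp_lineMap x y (hf _))
    (fun s _ => hasDerivAt_fderiv_comp_lineMap x y (hf' _))
    (fun s hs => hM _ (segment_eq_image_lineMap ℝ x y ▸ mem_image_of_mem _ hs)) ht
  simpa using this

theorem le_two_sqrt_mul_of_forall_mul_le {c a β : ℝ} (hβ : 0 < β) (hβa : β ≤ a)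
    (h : ∀ t ∈ Icc (0 : ℝ) 1, c * t ≤ β + a * t ^ 2) : c ≤ 2 * √(a * β) := by
  have ha : 0 < a := hβ.trans_le hβa
  set t := √(β / a)
  have ht_pos : 0 < t := Real.sqrt_pos.2 (div_pos hβ ha)
  have ht_le : t ≤ 1 := Real.sqrt_le_one.2 ((div_le_one ha).2 hβa)
  have hat2 : a * t ^ 2 = β := by
    rw [Real.sq_sqrt (div_pos hβ ha).le]
    field_simp
  have hsqrt : √(a * β) = a * t := by
    rw [← hat2, show a * (a * t ^ 2) = (a * t) ^ 2 by ring]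
    exact Real.sqrt_sq (by positivity)
  have := h t ⟨ht_pos.le, ht_le⟩
  rw [hsqrt]
  nlinarith

theorem approx_stationary_point_general
    {d : ℕ} (f : EuclideanSpace ℝ (Fin d) → ℝ) (hf : ContDiff ℝ 2 f)
    (θh θs : EuclideanSpace ℝ (Fin d))
    (L β : ℝ) (hβ : 0 < β) (hβL : β ≤ L * ‖θh - θs‖ ^ 2)
    (hHess : ∀ θ ∈ segment ℝ θh θs,
      fderiv ℝ (fderiv ℝ f) θ (θh - θs) (θh - θs) ≤ 2 * L * ‖θh - θs‖ ^ 2)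
    (hlow : ∀ θ ∈ segment ℝ θh θs, f θ ≥ f θh - β) :
    ⟪gradient f θh, θh - θs⟫ ≤ 2 * Real.sqrt (L * β) * ‖θh - θs‖ := by
  have hf' : Differentiable ℝ (fderiv ℝ f) :=
    (hf.fderiv_right (m := 1) (by norm_num)).differentiable (by norm_num)
  have hHess' : ∀ θ ∈ segment ℝ θh θs,
      fderiv ℝ (fderiv ℝ f) θ (θs - θh) (θs - θh) ≤ 2 * L * ‖θh - θs‖ ^ 2 := by
    intro θ hθ
    simpa only [← neg_sub θs θh, map_neg, neg_apply, neg_neg] using hHess θ hθ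
  have hgrad : fderiv ℝ f θh (θs - θh) = -⟪gradient f θh, θh - θs⟫ := by
    rw [inner_gradient_left, ← map_neg, neg_sub]
  have hdescent : ∀ t ∈ Icc (0 : ℝ) 1,
      ⟪gradient f θh, θh - θs⟫ * t ≤ β + L * ‖θh - θs‖ ^ 2 * t ^ 2 := fun t ht => by
    have hupper := le_taylor_lineMap_of_hessian_le (hf.differentiable (by norm_num)) hf' hHess' ht
    have hlower := hlow _ (segment_eq_image_lineMap ℝ θh θs ▸ mem_image_of_mem _ ht)
    rw [hgrad] at hupper
    linarith
  calc ⟪gradient f θh, θh - θs⟫ ≤ 2 * √(L * ‖θh - θs‖ ^ 2 * β) :=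
        le_two_sqrt_mul_of_forall_mul_le hβ hβL hdescent
    _ = 2 * Real.sqrt (L * β) * ‖θh - θs‖ := by
        rw [mul_right_comm, Real.sqrt_mul' _ (sq_nonneg _), Real.sqrt_sq (norm_nonneg _), mul_assoc]

/-- If `f` is `C²`, the Hessian quadratic form along the segment joining
`θ̂` and `θ*` (evaluated at the direction `θ̂ - θ*`) is at most `2L‖θ̂ - θ*‖²`, and `f` does not
decrease by more than `β ≤ L‖θ̂ - θ*‖²` anywhere on that segment, then `θ̂` is a
`2√(Lβ)`-approximate stationary point of `f` relative to `θ*`, i.e.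
`⟨∇f(θ̂), θ̂ - θ*⟩ ≤ 2√(Lβ)‖θ̂ - θ*‖`. -/
theorem approx_stationary_point
    {d : ℕ} (f : EuclideanSpace ℝ (Fin d) → ℝ) (hf : ContDiff ℝ 2 f)
    (θh θs : EuclideanSpace ℝ (Fin d)) (hne : θh ≠ θs)
    (L β : ℝ) (hL : 0 < L) (hβ : 0 < β) (hβL : β ≤ L * ‖θh - θs‖ ^ 2)
    (hHess : ∀ θ ∈ segment ℝ θh θs,
      fderiv ℝ (fderiv ℝ f) θ (θh - θs) (θh - θs) ≤ 2 * L * ‖θh - θs‖ ^ 2)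
    (hlow : ∀ θ ∈ segment ℝ θh θs, f θ ≥ f θh - β) :
    ⟪gradient f θh, θh - θs⟫ ≤ 2 * Real.sqrt (L * β) * ‖θh - θs‖ :=
  approx_stationary_point_general f hf θh θs L β hβ hβL hHess hlow
end

section
/- (Descent lemma along a segment.) Let f : R^d → R be twice continuously differentiable, let θ̂, θ* ∈ R^d with θ̂ ≠ θ*, and let γ, L > 0 with γ ≤ 2L‖θ̂ − θ*‖. Suppose (i) ⟨∇f(θ̂), θ̂ − θ*⟩ ≥ γ ‖θ̂ − θ*‖ > 0, and (ii) for every point θ̄ on the line segment joining θ̂ and θ*, ((θ̂−θ*)/‖θ̂−θ*‖)ᵀ ∇²f(θ̄) ((θ̂−θ*)/‖θ̂−θ*‖) ≤ 2L. Then there exists θ ∈ R^d (a point on the segment joining θ̂ and θ*) such that f(θ) ≤ f(θ̂) − γ²/(4L). -/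
/-!
Restrict `f` to the unit-speed ray `g t = f (θ̂ + t • u)` from `θ̂` towards `θ*`. Then `g' 0 ≤ -γ`
and `g'' ≤ 2L` on `[0, ‖θ̂ - θ*‖]`, so integrating twice gives `g t ≤ g 0 - γ t + L t²` there. The
right-hand side is minimal at `t = γ / (2L)`, which lies in that interval because
`γ ≤ 2L‖θ̂ - θ*‖`, and its minimum value is `g 0 - γ² / (4L)`.
-/

open Set
open scoped RealInnerProductSpace

theorem le_add_mul_add_sq_of_hasDerivAt {g g' g'' : ℝ → ℝ} {M t : ℝ}
    (hg : ∀ s, HasDerivAt g (g' s) s) (hg' : ∀ s, HasDerivAt g' (g'' s) s)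
    (ht : 0 ≤ t) (hM : ∀ s ∈ Icc 0 t, g'' s ≤ M) :
    g t ≤ g 0 + g' 0 * t + M / 2 * t ^ 2 := by
  have hg'_le : ∀ s ∈ Icc 0 t, g' s ≤ g' 0 + M * s := by
    intro s hs
    have := (convex_Icc 0 t).image_sub_le_mul_sub_of_deriv_le
      (fun s _ => (hg' s).continuousAt.continuousWithinAt)
      (fun s _ => (hg' s).differentiableAt.differentiableWithinAt)
      (fun s hs => (hg' s).deriv ▸ hM s (interior_subset hs)) 0 (left_mem_Icc.2 ht) s hs hs.1
    linarith
  have hφ : ∀ s, HasDerivAt (fun s => g s - g' 0 * s - M / 2 * s ^ 2) (g' s - g' 0 - M * s) s := by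
    intro s
    refine (((hg s).sub ((hasDerivAt_id' s).const_mul (g' 0))).sub
      ((hasDerivAt_pow 2 s).const_mul (M / 2))).congr_deriv ?_
    ring
  have := (convex_Icc 0 t).image_sub_le_mul_sub_of_deriv_le
    (fun s _ => (hφ s).continuousAt.continuousWithinAt)
    (fun s _ => (hφ s).differentiableAt.differentiableWithinAt)
    (C := 0) (fun s hs => by
      rw [(hφ s).deriv]
      linarith [hg'_le s (interior_subset hs)]) 0 (left_mem_Icc.2 ht) t (right_mem_Icc.2 ht) ht
  linarith

section

variable {E F : Type*} [NormedAddCommGroup E] [NormedSpace ℝ E]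
  [NormedAddCommGroup F] [NormedSpace ℝ F]

theorem add_smul_inv_norm_smul_sub_mem_segment {x y : E} {t : ℝ} (ht : t ∈ Icc 0 ‖y - x‖) :
    x + t • (‖y - x‖⁻¹ • (y - x)) ∈ segment ℝ x y := by
  rw [segment_eq_image', smul_smul]
  exact ⟨t * ‖y - x‖⁻¹, ⟨by have := ht.1; positivity, div_le_one_of_le₀ ht.2 (norm_nonneg _)⟩, rfl⟩

theorem DifferentiableAt.hasDerivAt_comp_add_smul {g : E → F} {x v : E} {t : ℝ}
    (hg : DifferentiableAt ℝ g (x + t • v)) :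
    HasDerivAt (fun s : ℝ => g (x + s • v)) (fderiv ℝ g (x + t • v) v) t :=
  hg.hasFDerivAt.comp_hasDerivAt t (by simpa using ((hasDerivAt_id t).smul_const v).const_add x)

theorem ContDiff.exists_mem_segment_le_sub_sq_div {f : E → ℝ} (hf : ContDiff ℝ 2 f)
    {x y : E} {γ M : ℝ} (hγ : 0 < γ) (hγM : γ ≤ M * ‖y - x‖)
    (hslope : fderiv ℝ f x (‖y - x‖⁻¹ • (y - x)) ≤ -γ)
    (hcurv : ∀ z ∈ segment ℝ x y,
      fderiv ℝ (fderiv ℝ f) z (‖y - x‖⁻¹ • (y - x)) (‖y - x‖⁻¹ • (y - x)) ≤ M) :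
    ∃ z ∈ segment ℝ x y, f z ≤ f x - γ ^ 2 / (2 * M) := by
  set u := ‖y - x‖⁻¹ • (y - x)
  have hM : 0 < M := pos_of_mul_pos_left (hγ.trans_le hγM) (norm_nonneg _)
  have htR : γ / M ≤ ‖y - x‖ := (div_le_iff₀' hM).2 hγM
  have hf₁ : Differentiable ℝ f := hf.differentiable (by norm_num)
  have hf₂ : Differentiable ℝ (fderiv ℝ f) := (hf.fderiv_right le_rfl).differentiable one_ne_zero
  have hg : ∀ s : ℝ, HasDerivAt (fun s => f (x + s • u)) (fderiv ℝ f (x + s • u) u) s :=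
    fun s => (hf₁ _).hasDerivAt_comp_add_smul
  have hg' : ∀ s : ℝ, HasDerivAt (fun s => fderiv ℝ f (x + s • u) u)
      (fderiv ℝ (fderiv ℝ f) (x + s • u) u u) s := fun s => by
    simpa using (hf₂ _).hasDerivAt_comp_add_smul.clm_apply (hasDerivAt_const s u)
  have hquad := le_add_mul_add_sq_of_hasDerivAt hg hg' (div_pos hγ hM).le
    fun s hs => hcurv _ (add_smul_inv_norm_smul_sub_mem_segment ⟨hs.1, hs.2.trans htR⟩)
  refine ⟨x + (γ / M) • u,
    add_smul_inv_norm_smul_sub_mem_segment ⟨(div_pos hγ hM).le, htR⟩, hquad.trans ?_⟩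
  simp only [zero_smul, add_zero]
  calc f x + fderiv ℝ f x u * (γ / M) + M / 2 * (γ / M) ^ 2
      ≤ f x + -γ * (γ / M) + M / 2 * (γ / M) ^ 2 := by gcongr
    _ = f x - γ ^ 2 / (2 * M) := by field_simp; ring

end

theorem descent_lemma_segment_general
    {d : ℕ} (f : EuclideanSpace ℝ (Fin d) → ℝ) (hf : ContDiff ℝ 2 f)
    (θh θs : EuclideanSpace ℝ (Fin d))
    (γ L : ℝ) (hγ : 0 < γ) (hγL : γ ≤ 2 * L * ‖θh - θs‖)
    (hgrad : ⟪gradient f θh, θh - θs⟫ ≥ γ * ‖θh - θs‖)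
    (hHess : ∀ θ ∈ segment ℝ θh θs,
      fderiv ℝ (fderiv ℝ f) θ (‖θh - θs‖⁻¹ • (θh - θs)) (‖θh - θs‖⁻¹ • (θh - θs)) ≤ 2 * L) :
    ∃ θ ∈ segment ℝ θh θs, f θ ≤ f θh - γ ^ 2 / (4 * L) := by
  have hdir : ‖θs - θh‖⁻¹ • (θs - θh) = -(‖θh - θs‖⁻¹ • (θh - θs)) := by
    rw [norm_sub_rev, ← smul_neg, neg_sub]
  have hR : 0 < ‖θh - θs‖ := (norm_nonneg _).lt_of_ne' fun h => hγ.not_ge (by simpa [h] using hγL)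
  have hslope : fderiv ℝ f θh (‖θs - θh‖⁻¹ • (θs - θh)) ≤ -γ := by
    rw [hdir, map_neg, map_smul, ← toDual_gradient, InnerProductSpace.toDual_apply_apply,
      smul_eq_mul, neg_le_neg_iff, le_inv_mul_iff₀ hR, mul_comm]
    exact hgrad
  have hγL' : γ ≤ 2 * L * ‖θs - θh‖ := norm_sub_rev θh θs ▸ hγL
  obtain ⟨θ, hθ, hfθ⟩ := hf.exists_mem_segment_le_sub_sq_div hγ hγL' hslope fun z hz => by
    simpa only [hdir, map_neg, neg_apply, neg_neg] using hHess z hz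
  exact ⟨θ, hθ, by convert hfθ using 3; ring⟩

/-- **Descent lemma along a segment.** If `f` is `C²`, `0 < γ ≤ 2L‖θ̂ - θ*‖`,
`⟨∇f(θ̂), θ̂ - θ*⟩ ≥ γ‖θ̂ - θ*‖ > 0`, and the normalized Hessian quadratic form along the
segment joining `θ̂` and `θ*` is bounded by `2L`, then some point `θ` on that segment satisfies
`f(θ) ≤ f(θ̂) - γ²/(4L)`. -/
theorem descent_lemma_segment
    {d : ℕ} (f : EuclideanSpace ℝ (Fin d) → ℝ) (hf : ContDiff ℝ 2 f)
    (θh θs : EuclideanSpace ℝ (Fin d)) (hne : θh ≠ θs)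
    (γ L : ℝ) (hγ : 0 < γ) (hL : 0 < L) (hγL : γ ≤ 2 * L * ‖θh - θs‖)
    (hgrad : ⟪gradient f θh, θh - θs⟫ ≥ γ * ‖θh - θs‖)
    (hgradpos : γ * ‖θh - θs‖ > 0)
    (hHess : ∀ θ ∈ segment ℝ θh θs,
      fderiv ℝ (fderiv ℝ f) θ (‖θh - θs‖⁻¹ • (θh - θs)) (‖θh - θs‖⁻¹ • (θh - θs)) ≤ 2 * L) :
    ∃ θ ∈ segment ℝ θh θs, f θ ≤ f θh - γ ^ 2 / (4 * L) :=
  descent_lemma_segment_general f hf θh θs γ L hγ hγL hgrad hHess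
end

section
/- Let θ* ∈ R^d be a unit vector and η̄ ∈ R, and let F(θ) = (1/4)(3‖θ‖⁴ + 3 − 4⟨θ, θ*⟩² − 2‖θ‖² − 2‖θ‖² η̄ + 2η̄ + c₀) be the population loss. If θ ∈ R^d satisfies ∇F(θ) = 0, then exactly one of the following holds: (a) θ = 0; (b) ⟨θ, θ*⟩ = 0 and 3‖θ‖² = 1 + η̄ (possible only when η̄ ≥ −1); or (c) θ = κ θ* or θ = −κ θ* with κ = √(1 + η̄/3) (possible only when η̄ ≥ −3). Conversely, every point of these three types is a critical point of F. -/
open scoped RealInnerProductSpace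

/-- The closed-form population loss of corrupted phase retrieval with average corruption
`η̄` and additive constant `c₀`. -/
noncomputable def popLoss {d : ℕ} (θs : EuclideanSpace ℝ (Fin d)) (ηbar c₀ : ℝ)
    (θ : EuclideanSpace ℝ (Fin d)) : ℝ :=
  (1 / 4 : ℝ) * (3 * ‖θ‖ ^ 4 + 3 - 4 * ⟪θ, θs⟫ ^ 2 - 2 * ‖θ‖ ^ 2 -
    2 * ‖θ‖ ^ 2 * ηbar + 2 * ηbar + c₀)

lemma popLoss_hasGradientAt (d : ℕ) (θs : EuclideanSpace ℝ (Fin d)) (ηbar c₀ : ℝ)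
    (θ : EuclideanSpace ℝ (Fin d)) :
    HasGradientAt (popLoss θs ηbar c₀)
      ((3 * ‖θ‖ ^ 2 - 1 - ηbar) • θ - (2 * ⟪θ, θs⟫) • θs) θ := by
  rw [hasGradientAt_iff_hasFDerivAt]
  have h1 : HasFDerivAt (fun x : EuclideanSpace ℝ (Fin d) => ‖x‖ ^ 2)
      (2 • innerSL ℝ θ) θ := (hasStrictFDerivAt_norm_sq θ).hasFDerivAt
  have h2 : HasFDerivAt (fun x : EuclideanSpace ℝ (Fin d) => ⟪x, θs⟫)
      (innerSL ℝ θs) θ := by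
    have : (fun x : EuclideanSpace ℝ (Fin d) => ⟪x, θs⟫) = fun x => (innerSL ℝ θs) x :=
      funext fun x => real_inner_comm _ _
    rw [this]
    exact (innerSL ℝ θs).hasFDerivAt
  have hfun : popLoss θs ηbar c₀ =
      (fun x : EuclideanSpace ℝ (Fin d) =>
      (1 / 4 : ℝ) * (3 * (‖x‖ ^ 2 * ‖x‖ ^ 2) + 3 - 4 * (⟪x, θs⟫ * ⟪x, θs⟫) - 2 * ‖x‖ ^ 2 -
        2 * ‖x‖ ^ 2 * ηbar + 2 * ηbar + c₀)) := by
    funext x; unfold popLoss; ring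
  rw [hfun]
  refine HasFDerivAt.congr_fderiv
    (HasFDerivAt.const_mul ((((((((h1.mul h1).const_mul 3).add_const 3).sub
      ((h2.mul h2).const_mul 4)).sub (h1.const_mul 2)).sub
      ((h1.const_mul 2).mul_const ηbar)).add_const (2*ηbar)).add_const c₀) (1/4)) ?_
  ext h
  simp [InnerProductSpace.toDual_apply_apply, inner_sub_left, real_inner_smul_left, real_inner_comm]
  ring

/-- A point `θ` is a critical point of the population loss `F`
(`∇F(θ) = 0`) if and only if one of the following holds:
(a) `θ = 0`; (b) `⟨θ, θ*⟩ = 0` and `3‖θ‖² = 1 + η̄` (which is possible only when `η̄ ≥ −1`,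
since `3‖θ‖² ≥ 0`); or (c) `η̄ ≥ −3` and `θ = ±κθ*` with `κ = √(1 + η̄/3)`. -/
theorem population_loss_critical_points
    (d : ℕ) (θs : EuclideanSpace ℝ (Fin d)) (hθs : ‖θs‖ = 1) (ηbar c₀ : ℝ)
    (θ : EuclideanSpace ℝ (Fin d)) :
    gradient (popLoss θs ηbar c₀) θ = 0 ↔
      θ = 0 ∨
      (⟪θ, θs⟫ = 0 ∧ 3 * ‖θ‖ ^ 2 = 1 + ηbar) ∨
      (-3 ≤ ηbar ∧
        (θ = Real.sqrt (1 + ηbar / 3) • θs ∨ θ = -(Real.sqrt (1 + ηbar / 3) • θs))) := by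
  rw [(popLoss_hasGradientAt d θs ηbar c₀ θ).gradient]
  constructor
  · intro h
    have heq : (3 * ‖θ‖ ^ 2 - 1 - ηbar) • θ = (2 * ⟪θ, θs⟫) • θs := sub_eq_zero.mp h
    by_cases ht : ⟪θ, θs⟫ = 0
    · rw [ht] at heq
      simp only [mul_zero, zero_smul] at heq
      rcases smul_eq_zero.mp heq with ha | hθ
      · exact Or.inr (Or.inl ⟨ht, by linarith⟩)
      · exact Or.inl hθ
    · -- take the inner product of both sides with θs
      have hinner : (3 * ‖θ‖ ^ 2 - 1 - ηbar) * ⟪θ, θs⟫ = 2 * ⟪θ, θs⟫ := by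
        have h' := congrArg (fun v : EuclideanSpace ℝ (Fin d) => ⟪v, θs⟫) heq
        simp only [real_inner_smul_left, real_inner_self_eq_norm_sq, hθs] at h'
        rw [h']; ring
      have ha : 3 * ‖θ‖ ^ 2 - 1 - ηbar = 2 := mul_right_cancel₀ ht hinner
      have hθeq : θ = ⟪θ, θs⟫ • θs := by
        rw [ha] at heq
        have h2 : (2 : ℝ) • θ = (2 : ℝ) • (⟪θ, θs⟫ • θs) := by
          rw [smul_smul]; exact heq
        exact smul_right_injective _ (two_ne_zero) h2
      have hnorm : ‖θ‖ ^ 2 = ⟪θ, θs⟫ ^ 2 := by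
        nth_rewrite 1 [hθeq]
        rw [norm_smul, hθs, mul_one, Real.norm_eq_abs, sq_abs]
      have htsq : ⟪θ, θs⟫ ^ 2 = 1 + ηbar / 3 := by
        rw [hnorm] at ha; linarith
      have hη : -3 ≤ ηbar := by nlinarith [sq_nonneg ⟪θ, θs⟫]
      have hsqrt : Real.sqrt (1 + ηbar / 3) = |⟪θ, θs⟫| := by
        rw [← htsq, Real.sqrt_sq_eq_abs]
      refine Or.inr (Or.inr ⟨hη, ?_⟩)
      rcases lt_or_gt_of_ne ht with hneg | hpos
      · right
        rw [hθeq, hsqrt, abs_of_neg hneg, neg_smul, neg_neg]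
      · left
        rw [hθeq, hsqrt, abs_of_pos hpos]
  · rintro (rfl | ⟨ht, hn⟩ | ⟨hη, (rfl | rfl)⟩)
    · simp
    · have ha : 3 * ‖θ‖ ^ 2 - 1 - ηbar = 0 := by linarith
      rw [ht, ha]; simp
    · have hk : (0 : ℝ) ≤ 1 + ηbar / 3 := by linarith
      have hns : ‖Real.sqrt (1 + ηbar / 3) • θs‖ ^ 2 = 1 + ηbar / 3 := by
        rw [norm_smul, hθs, mul_one, Real.norm_eq_abs, sq_abs, Real.sq_sqrt hk]
      have hin : ⟪Real.sqrt (1 + ηbar / 3) • θs, θs⟫ = Real.sqrt (1 + ηbar / 3) := by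
        rw [real_inner_smul_left, real_inner_self_eq_norm_sq, hθs]; ring
      rw [hns, hin]
      have ha : 3 * (1 + ηbar / 3) - 1 - ηbar = 2 := by ring
      rw [ha, smul_smul, ← sub_smul]
      norm_num
    · have hk : (0 : ℝ) ≤ 1 + ηbar / 3 := by linarith
      have hns : ‖-(Real.sqrt (1 + ηbar / 3) • θs)‖ ^ 2 = 1 + ηbar / 3 := by
        rw [norm_neg, norm_smul, hθs, mul_one, Real.norm_eq_abs, sq_abs, Real.sq_sqrt hk]
      have hin : ⟪-(Real.sqrt (1 + ηbar / 3) • θs), θs⟫ = -Real.sqrt (1 + ηbar / 3) := by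
        rw [inner_neg_left, real_inner_smul_left, real_inner_self_eq_norm_sq, hθs]; ring
      rw [hns, hin]
      have ha : 3 * (1 + ηbar / 3) - 1 - ηbar = 2 := by ring
      rw [ha, smul_neg, smul_smul]
      have : (2 * -Real.sqrt (1 + ηbar / 3)) • θs = -((2 * Real.sqrt (1 + ηbar / 3)) • θs) := by
        rw [← neg_smul]; ring_nf
      rw [this, sub_neg_eq_add, neg_add_cancel]
end

section
/- Let θ* ∈ R^d be a unit vector and η̄ ∈ R with η̄ ≤ −3, and let F(θ) = (1/4)(3‖θ‖⁴ + 3 − 4⟨θ, θ*⟩² − 2‖θ‖² − 2‖θ‖² η̄ + 2η̄ + c₀). Then F is convex on R^d (its Hessian 6θθᵀ + (3‖θ‖² − 1 − η̄)I − 2θ*θ*ᵀ is positive semidefinite at every θ), and θ = 0 is a global minimizer of F. -/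
open scoped RealInnerProductSpace

section Aux

variable {E : Type*} [NormedAddCommGroup E] [InnerProductSpace ℝ E]

lemma convexOn_norm_pow (n : ℕ) : ConvexOn ℝ Set.univ (fun x : E => ‖x‖ ^ n) := by
  refine ⟨convex_univ, fun x _ y _ a b ha hb hab => ?_⟩
  have h1 : ‖a • x + b • y‖ ≤ a * ‖x‖ + b * ‖y‖ := by
    calc ‖a • x + b • y‖ ≤ ‖a • x‖ + ‖b • y‖ := norm_add_le _ _
      _ = a * ‖x‖ + b * ‖y‖ := by
          rw [norm_smul, norm_smul, Real.norm_eq_abs, Real.norm_eq_abs,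
            abs_of_nonneg ha, abs_of_nonneg hb]
  calc ‖a • x + b • y‖ ^ n ≤ (a * ‖x‖ + b * ‖y‖) ^ n :=
        pow_le_pow_left₀ (norm_nonneg _) h1 n
    _ ≤ a * ‖x‖ ^ n + b * ‖y‖ ^ n := by
        have := (convexOn_pow (𝕜 := ℝ) n).2 (Set.mem_Ici.2 (norm_nonneg x))
          (Set.mem_Ici.2 (norm_nonneg y)) ha hb hab
        simpa using this

lemma convexOn_proj_sq (θs : E) :
    ConvexOn ℝ Set.univ (fun θ : E => ‖θ - ⟪θ, θs⟫ • θs‖ ^ 2) := by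
  set p : E → E := fun θ => θ - ⟪θ, θs⟫ • θs with hp
  refine ⟨convex_univ, fun x _ y _ a b ha hb hab => ?_⟩
  have hlin : p (a • x + b • y) = a • p x + b • p y := by
    simp only [hp, inner_add_left, real_inner_smul_left, add_smul, smul_smul,
      smul_sub]
    module
  have h1 : ‖p (a • x + b • y)‖ ≤ a * ‖p x‖ + b * ‖p y‖ := by
    rw [hlin]
    calc ‖a • p x + b • p y‖ ≤ ‖a • p x‖ + ‖b • p y‖ := norm_add_le _ _
      _ = a * ‖p x‖ + b * ‖p y‖ := by
          rw [norm_smul, norm_smul, Real.norm_eq_abs, Real.norm_eq_abs,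
            abs_of_nonneg ha, abs_of_nonneg hb]
  calc ‖p (a • x + b • y)‖ ^ 2 ≤ (a * ‖p x‖ + b * ‖p y‖) ^ 2 :=
        pow_le_pow_left₀ (norm_nonneg _) h1 2
    _ ≤ a * ‖p x‖ ^ 2 + b * ‖p y‖ ^ 2 := by
        have := (convexOn_pow (𝕜 := ℝ) 2).2 (Set.mem_Ici.2 (norm_nonneg (p x)))
          (Set.mem_Ici.2 (norm_nonneg (p y))) ha hb hab
        simpa using this

lemma proj_sq_eq (θs : E) (hθs : ‖θs‖ = 1) (θ : E) :
    ‖θ - ⟪θ, θs⟫ • θs‖ ^ 2 = ‖θ‖ ^ 2 - ⟪θ, θs⟫ ^ 2 := by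
  rw [norm_sub_sq_real, real_inner_smul_right, norm_smul, Real.norm_eq_abs, hθs,
    mul_pow, sq_abs]
  ring

end Aux

/-- If `η̄ ≤ −3`, then the population loss `F` is convex on `ℝ^d`, its
Hessian `6θθᵀ + (3‖θ‖² − 1 − η̄)I − 2θ*θ*ᵀ` is positive semidefinite at every `θ` (as a
quadratic form in `v`), and `θ = 0` is a global minimizer of `F`. -/
theorem population_loss_convex_regime
    (d : ℕ) (θs : EuclideanSpace ℝ (Fin d)) (hθs : ‖θs‖ = 1) (ηbar c₀ : ℝ)
    (h : ηbar ≤ -3) :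
    ConvexOn ℝ Set.univ (popLoss θs ηbar c₀) ∧
    (∀ θ v : EuclideanSpace ℝ (Fin d),
      0 ≤ 6 * ⟪θ, v⟫ ^ 2 + (3 * ‖θ‖ ^ 2 - 1 - ηbar) * ‖v‖ ^ 2 - 2 * ⟪θs, v⟫ ^ 2) ∧
    (∀ θ, popLoss θs ηbar c₀ 0 ≤ popLoss θs ηbar c₀ θ) := by
  have hc : (0 : ℝ) ≤ (-(3 + ηbar)) / 2 := by linarith
  refine ⟨?_, ?_, ?_⟩
  · -- convexity
    have hrw : popLoss θs ηbar c₀ = fun θ : EuclideanSpace ℝ (Fin d) =>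
        (3 / 4 : ℝ) * ‖θ‖ ^ 4 + ‖θ - ⟪θ, θs⟫ • θs‖ ^ 2 +
          ((-(3 + ηbar)) / 2) * ‖θ‖ ^ 2 + (3 + 2 * ηbar + c₀) / 4 := by
      funext θ
      rw [popLoss, proj_sq_eq θs hθs θ]
      ring
    rw [hrw]
    refine ConvexOn.add (ConvexOn.add (ConvexOn.add ?_ (convexOn_proj_sq θs)) ?_)
      (convexOn_const _ convex_univ)
    · exact (convexOn_norm_pow 4).smul (by norm_num)
    · exact (convexOn_norm_pow 2).smul hc
  · -- Hessian PSD
    intro θ v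
    have hcs : ⟪θs, v⟫ * ⟪θs, v⟫ ≤ ‖v‖ ^ 2 := by
      have := real_inner_mul_inner_self_le θs v
      rwa [real_inner_self_eq_norm_sq, real_inner_self_eq_norm_sq, hθs, one_pow,
        one_mul] at this
    nlinarith [sq_nonneg ⟪θ, v⟫, sq_nonneg ‖v‖, sq_nonneg ‖θ‖,
      mul_nonneg (mul_nonneg (sq_nonneg ‖θ‖) (sq_nonneg ‖v‖)) (by norm_num : (0:ℝ) ≤ 3)]
  · -- global minimizer
    intro θ
    have hcs : ⟪θ, θs⟫ * ⟪θ, θs⟫ ≤ ‖θ‖ ^ 2 := by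
      have := real_inner_mul_inner_self_le θ θs
      rwa [real_inner_self_eq_norm_sq, real_inner_self_eq_norm_sq, hθs, one_pow,
        mul_one] at this
    simp only [popLoss, norm_zero, inner_zero_left]
    nlinarith [sq_nonneg ‖θ‖, sq_nonneg (‖θ‖ ^ 2)]
end

section
/- Let θ* ∈ R^d be a unit vector and η̄ ∈ R with η̄ > −3, and let F(θ) = (1/4)(3‖θ‖⁴ + 3 − 4⟨θ, θ*⟩² − 2‖θ‖² − 2‖θ‖² η̄ + 2η̄ + c₀). Then the set of global minimizers of F is exactly { κθ*, −κθ* } where κ = √(1 + η̄/3). -/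
set_option maxHeartbeats 800000


open scoped RealInnerProductSpace

/-- If `η̄ > −3`, then the set of global minimizers of the population loss
`F` is exactly `{κθ*, −κθ*}` with `κ = √(1 + η̄/3)`. -/
theorem population_loss_global_minimizers
    (d : ℕ) (θs : EuclideanSpace ℝ (Fin d)) (hθs : ‖θs‖ = 1) (ηbar c₀ : ℝ)
    (h : -3 < ηbar) :
    {θ : EuclideanSpace ℝ (Fin d) | ∀ θ', popLoss θs ηbar c₀ θ ≤ popLoss θs ηbar c₀ θ'} =
      {Real.sqrt (1 + ηbar / 3) • θs, -(Real.sqrt (1 + ηbar / 3) • θs)} := by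
  have hk2 : (0:ℝ) < 1 + ηbar / 3 := by linarith
  set κ := Real.sqrt (1 + ηbar / 3) with hκ
  have hκnn : 0 ≤ κ := Real.sqrt_nonneg _
  have hκ2 : κ ^ 2 = 1 + ηbar / 3 := Real.sq_sqrt hk2.le
  have hinner1 : ⟪(κ • θs : EuclideanSpace ℝ (Fin d)), θs⟫ = κ := by
    rw [real_inner_smul_left, real_inner_self_eq_norm_sq, hθs]; ring
  have hnorm1 : ‖(κ • θs : EuclideanSpace ℝ (Fin d))‖ = κ := by
    rw [norm_smul, hθs, mul_one, Real.norm_eq_abs, abs_of_nonneg hκnn]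
  have hinner2 : ⟪(-(κ • θs) : EuclideanSpace ℝ (Fin d)), θs⟫ = -κ := by
    rw [inner_neg_left, hinner1]
  have hnorm2 : ‖(-(κ • θs) : EuclideanSpace ℝ (Fin d))‖ = κ := by rw [norm_neg, hnorm1]
  have hcs : ∀ θ : EuclideanSpace ℝ (Fin d), ⟪θ, θs⟫ ^ 2 ≤ ‖θ‖ ^ 2 := by
    intro θ
    have h1 := abs_real_inner_le_norm θ θs
    rw [hθs, mul_one] at h1
    calc ⟪θ, θs⟫ ^ 2 = |⟪θ, θs⟫| ^ 2 := (sq_abs _).symm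
      _ ≤ ‖θ‖ ^ 2 := by nlinarith [abs_nonneg ⟪θ, θs⟫, norm_nonneg θ]
  have hle : ∀ θ : EuclideanSpace ℝ (Fin d),
      popLoss θs ηbar c₀ (κ • θs) ≤ popLoss θs ηbar c₀ θ := by
    intro θ
    have h1 := hcs θ
    unfold popLoss
    rw [hinner1, hnorm1]
    nlinarith [sq_nonneg (‖θ‖ ^ 2 - κ ^ 2)]
  ext θ
  simp only [Set.mem_setOf_eq, Set.mem_insert_iff, Set.mem_singleton_iff]
  constructor
  · intro hmin
    have h1 : popLoss θs ηbar c₀ θ = popLoss θs ηbar c₀ (κ • θs) :=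
      le_antisymm (hmin _) (hle θ)
    have hcsθ := hcs θ
    have key : 3 * (‖θ‖ ^ 2 - κ ^ 2) ^ 2 + 4 * (‖θ‖ ^ 2 - ⟪θ, θs⟫ ^ 2) = 0 := by
      unfold popLoss at h1
      rw [hinner1, hnorm1] at h1
      nlinarith
    have h2 : ‖θ‖ ^ 2 = κ ^ 2 := by nlinarith [sq_nonneg (‖θ‖ ^ 2 - κ ^ 2)]
    have h3 : ⟪θ, θs⟫ ^ 2 = ‖θ‖ ^ 2 := by nlinarith [sq_nonneg (‖θ‖ ^ 2 - κ ^ 2)]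
    set c := ⟪θ, θs⟫ with hc
    have hzero : ‖θ - c • θs‖ ^ 2 = 0 := by
      rw [norm_sub_sq_real, real_inner_smul_right, norm_smul, hθs, mul_one,
        Real.norm_eq_abs, sq_abs]
      nlinarith
    have hθeq : θ = c • θs := by
      have := norm_eq_zero.mp (sq_eq_zero_iff.mp hzero)
      exact sub_eq_zero.mp this
    have hc2 : (c - κ) * (c + κ) = 0 := by nlinarith
    rcases mul_eq_zero.mp hc2 with h4 | h4
    · left; rw [hθeq, sub_eq_zero.mp h4]
    · right; rw [hθeq, show c = -κ by linarith, neg_smul]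
  · rintro (rfl | rfl)
    · exact hle
    · intro θ'
      have heq : popLoss θs ηbar c₀ (-(κ • θs)) = popLoss θs ηbar c₀ (κ • θs) := by
        unfold popLoss; rw [hinner1, hnorm1, hinner2, hnorm2]; ring
      rw [heq]; exact hle θ'
end
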